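/- Let φ: V → W be a linear map between finite-dimensional real vector spaces. For a Dirac structure L_V on V, the forward image 𝔉φ(L_V) = {(φ(x), η) : x ∈ V, η ∈ W*, (x, φ*η) ∈ L_V} is a Dirac structure on W. For a Dirac structure L_W on W, the backward image 𝔅φ(L_W) = {(x, φ*η) : x ∈ V, η ∈ W*, (φ(x), η) ∈ L_W} is a Dirac structure on V. -/

import Mathlib

open Module LinearMap

variable {V W U : Type*} [AddCommGroup V] [Module ℝ V] [FiniteDimensional ℝ V]
  [AddCommGroup W] [Module ℝ W] [FiniteDimensional ℝ W]
  [AddCommGroup U] [Module ℝ U] [FiniteDimensional ℝ U]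

/-- The canonical symmetric pairing on `V ⊕ V*`. -/
noncomputable def diracPairing (p q : V × Module.Dual ℝ V) : ℝ := (p.2 q.1 + q.2 p.1) / 2

/-- A subspace of `V ⊕ V*` is isotropic if the pairing vanishes on it. -/
def IsIsotropic (L : Submodule ℝ (V × Module.Dual ℝ V)) : Prop :=
  ∀ p ∈ L, ∀ q ∈ L, diracPairing p q = 0

/-- A Dirac structure: a maximally isotropic subspace. -/
def IsDirac (L : Submodule ℝ (V × Module.Dual ℝ V)) : Prop :=
  IsIsotropic L ∧ ∀ L' : Submodule ℝ (V × Module.Dual ℝ V), IsIsotropic L' → L ≤ L' → L' = L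

/-- The graph of a bivector `π : V* → V`. -/
def graphBiv (π : Module.Dual ℝ V →ₗ[ℝ] V) : Submodule ℝ (V × Module.Dual ℝ V) where
  carrier := {p | p.1 = π p.2}
  add_mem' := by
    intro a b ha hb
    simp only [Set.mem_setOf_eq, Prod.fst_add, Prod.snd_add, map_add] at *
    rw [ha, hb]
  zero_mem' := by simp
  smul_mem' := by
    intro c a ha
    simp only [Set.mem_setOf_eq, Prod.smul_fst, Prod.smul_snd, map_smul] at *
    rw [ha]

/-- Forward image of a Dirac structure along a linear map. -/
def Fwd (φ : V →ₗ[ℝ] W) (L : Submodule ℝ (V × Module.Dual ℝ V)) :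
    Submodule ℝ (W × Module.Dual ℝ W) where
  carrier := {q | ∃ x : V, q.1 = φ x ∧ (x, φ.dualMap q.2) ∈ L}
  add_mem' := by
    rintro a b ⟨x, hx, hxL⟩ ⟨y, hy, hyL⟩
    refine ⟨x + y, ?_, ?_⟩
    · simp [Prod.fst_add, hx, hy]
    · simpa [Prod.snd_add, Prod.mk_add_mk] using L.add_mem hxL hyL
  zero_mem' := ⟨0, by simp, by convert L.zero_mem using 1; ext <;> simp⟩
  smul_mem' := by
    rintro c a ⟨x, hx, hxL⟩
    refine ⟨c • x, ?_, ?_⟩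
    · simp [Prod.smul_fst, hx]
    · simpa [Prod.smul_snd, Prod.smul_mk] using L.smul_mem c hxL

/-- Backward image of a Dirac structure along a linear map. -/
def Bwd (φ : V →ₗ[ℝ] W) (L : Submodule ℝ (W × Module.Dual ℝ W)) :
    Submodule ℝ (V × Module.Dual ℝ V) where
  carrier := {p | ∃ η : Module.Dual ℝ W, p.2 = φ.dualMap η ∧ (φ p.1, η) ∈ L}
  add_mem' := by
    rintro a b ⟨x, hx, hxL⟩ ⟨y, hy, hyL⟩
    refine ⟨x + y, ?_, ?_⟩
    · simp [Prod.snd_add, hx, hy]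
    · simpa [Prod.fst_add, Prod.mk_add_mk] using L.add_mem hxL hyL
  zero_mem' := ⟨0, by simp, by convert L.zero_mem using 1; ext <;> simp⟩
  smul_mem' := by
    rintro c a ⟨x, hx, hxL⟩
    refine ⟨c • x, ?_, ?_⟩
    · simp [Prod.smul_snd, hx]
    · simpa [Prod.smul_fst, Prod.smul_mk] using L.smul_mem c hxL

/-- Gauge transformation of a Dirac structure by a 2-form `B : V → V*`. -/
def tau (B : V →ₗ[ℝ] Module.Dual ℝ V) (L : Submodule ℝ (V × Module.Dual ℝ V)) :
    Submodule ℝ (V × Module.Dual ℝ V) where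
  carrier := {p | (p.1, p.2 - B p.1) ∈ L}
  add_mem' := by
    intro a b ha hb
    have := L.add_mem ha hb
    simpa [Prod.mk_add_mk, Prod.fst_add, Prod.snd_add, map_add, add_sub_add_comm] using this
  zero_mem' := by
    change ((0 : V × Module.Dual ℝ V).1, (0 : V × Module.Dual ℝ V).2 - B (0 : V × Module.Dual ℝ V).1) ∈ L
    convert L.zero_mem using 1; ext <;> simp
  smul_mem' := by
    intro c a ha
    have := L.smul_mem c ha
    simpa [Prod.smul_mk, Prod.smul_fst, Prod.smul_snd, smul_sub] using this

/-- Orthogonal of a subspace with respect to a bilinear form `Ω : V → V*`. -/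
def orth (Ω : V →ₗ[ℝ] Module.Dual ℝ V) (S : Submodule ℝ V) : Submodule ℝ V where
  carrier := {x | ∀ y ∈ S, Ω x y = 0}
  add_mem' := by
    intro a b ha hb y hy
    simp [map_add, ha y hy, hb y hy]
  zero_mem' := by simp
  smul_mem' := by
    intro c a ha y hy
    simp [ha y hy]

/-- Pullback of a 2-form along a linear map. -/
def pb (φ : V →ₗ[ℝ] W) (B : W →ₗ[ℝ] Module.Dual ℝ W) : V →ₗ[ℝ] Module.Dual ℝ V :=
  φ.dualMap ∘ₗ B ∘ₗ φ

/-- The Dirac structure associated to a pair `(R, Ω)` of a subspace and a skew form on it. -/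
def diracOfForm (R : Submodule ℝ V) (Ω : R →ₗ[ℝ] Module.Dual ℝ R) :
    Submodule ℝ (V × Module.Dual ℝ V) where
  carrier := {p | ∃ hx : p.1 ∈ R, ∀ y : R, p.2 y = Ω ⟨p.1, hx⟩ y}
  add_mem' := by
    rintro a b ⟨ha, Ha⟩ ⟨hb, Hb⟩
    refine ⟨R.add_mem ha hb, fun y => ?_⟩
    have h : (⟨(a + b).1, R.add_mem ha hb⟩ : R) = ⟨a.1, ha⟩ + ⟨b.1, hb⟩ := rfl
    rw [h, map_add]
    simp [Prod.snd_add, Ha y, Hb y]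
  zero_mem' := by
    refine ⟨R.zero_mem, fun y => ?_⟩
    have h : (⟨((0 : V × Module.Dual ℝ V)).1, R.zero_mem⟩ : R) = 0 := rfl
    rw [h, map_zero]
    rfl
  smul_mem' := by
    rintro c a ⟨ha, Ha⟩
    refine ⟨R.smul_mem c ha, fun y => ?_⟩
    have h : (⟨(c • a).1, R.smul_mem c ha⟩ : R) = c • ⟨a.1, ha⟩ := rfl
    rw [h, map_smul]
    simp [Prod.smul_snd, Ha y]

/-!
A Dirac structure `L` is Lagrangian, `L = L^⊥`: maximality puts every isotropic vector of `L^⊥`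
into `L`, in particular all of `0 ⊕ ann(pr_V L)`, which forces `dim L ≥ dim V`, while
`dim L^⊥ = 2 dim V - dim L`. Both images are compositions of a Lagrangian subspace with the
Lagrangian relation `{((x, φ*η), (φ x, η))}`, and such a composition is again Lagrangian:
isotropy is immediate, and `(L ∘ R)^⊥ ⊆ L ∘ R` is a Fredholm-alternative argument in which
every linear functional is represented through the nondegenerate pairing.
-/

variable {E F P : Type*} [AddCommGroup E] [Module ℝ E] [AddCommGroup F] [Module ℝ F]
  [AddCommGroup P] [Module ℝ P]

lemma diracPairing_comm (p q : E × Dual ℝ E) : diracPairing p q = diracPairing q p := by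
  rw [diracPairing, diracPairing, add_comm]

noncomputable def diracFlat : (E × Dual ℝ E) →ₗ[ℝ] Dual ℝ (E × Dual ℝ E) :=
  LinearMap.mk₂ ℝ diracPairing
    (fun _ _ _ => by simp only [diracPairing, Prod.fst_add, Prod.snd_add, map_add,
      LinearMap.add_apply]; ring)
    (fun _ _ _ => by simp only [diracPairing, Prod.smul_fst, Prod.smul_snd, map_smul,
      LinearMap.smul_apply, smul_eq_mul]; ring)
    (fun _ _ _ => by simp only [diracPairing, Prod.fst_add, Prod.snd_add, map_add,
      LinearMap.add_apply]; ring)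
    (fun _ _ _ => by simp only [diracPairing, Prod.smul_fst, Prod.smul_snd, map_smul,
      LinearMap.smul_apply, smul_eq_mul]; ring)

@[simp]
lemma diracFlat_apply (p q : E × Dual ℝ E) : diracFlat p q = diracPairing p q := rfl

lemma diracFlat_injective : Function.Injective (diracFlat (E := E)) := by
  refine (injective_iff_map_eq_zero _).mpr fun ⟨x, ξ⟩ h => ?_
  have hpair : ∀ q, diracPairing (x, ξ) q = 0 := fun q => by rw [← diracFlat_apply, h]; rfl
  have hx : x = 0 := (Module.forall_dual_apply_eq_zero_iff ℝ x).mp fun ζ => by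
    simpa [diracPairing] using hpair (0, ζ)
  have hξ : ξ = 0 := LinearMap.ext fun y => by simpa [diracPairing, hx] using hpair (y, 0)
  rw [hx, hξ, Prod.mk_zero_zero]

noncomputable def diracFlatEquiv [FiniteDimensional ℝ E] :
    (E × Dual ℝ E) ≃ₗ[ℝ] Dual ℝ (E × Dual ℝ E) :=
  diracFlat.linearEquivOfInjective diracFlat_injective Subspace.dual_finrank_eq.symm

lemma diracPairing_diracFlatEquiv_symm [FiniteDimensional ℝ E] (f : Dual ℝ (E × Dual ℝ E))
    (p : E × Dual ℝ E) : diracPairing (diracFlatEquiv.symm f) p = f p := by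
  rw [← diracFlat_apply]
  exact congr($(diracFlatEquiv.apply_symm_apply f) p)

noncomputable def perp (L : Submodule ℝ (E × Dual ℝ E)) : Submodule ℝ (E × Dual ℝ E) :=
  L.dualAnnihilator.comap diracFlat

lemma mem_perp {L : Submodule ℝ (E × Dual ℝ E)} {q : E × Dual ℝ E} :
    q ∈ perp L ↔ ∀ p ∈ L, diracPairing q p = 0 :=
  Submodule.mem_dualAnnihilator _

lemma finrank_perp_add_finrank [FiniteDimensional ℝ E] (L : Submodule ℝ (E × Dual ℝ E)) :
    finrank ℝ (perp L) + finrank ℝ L = 2 * finrank ℝ E := by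
  have hperp : perp L = L.dualAnnihilator.map (diracFlatEquiv (E := E)).symm.toLinearMap :=
    Submodule.comap_equiv_eq_map_symm diracFlatEquiv _
  rw [hperp, LinearEquiv.finrank_map_eq, add_comm, Subspace.finrank_add_finrank_dualAnnihilator_eq,
    Module.finrank_prod, Subspace.dual_finrank_eq, two_mul]

lemma IsIsotropic.le_perp {L : Submodule ℝ (E × Dual ℝ E)} (hL : IsIsotropic L) : L ≤ perp L :=
  fun q hq => mem_perp.mpr fun p hp => diracPairing_comm q p ▸ hL p hp q hq

lemma isDirac_of_isIsotropic_of_perp_le {L : Submodule ℝ (E × Dual ℝ E)} (hL : IsIsotropic L)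
    (hperp : perp L ≤ L) : IsDirac L :=
  ⟨hL, fun _ hL' hle => le_antisymm (fun q hq => hperp <| mem_perp.mpr fun p hp =>
    hL' q hq p (hle hp)) hle⟩

lemma IsDirac.mem_of_mem_perp {L : Submodule ℝ (E × Dual ℝ E)} (hL : IsDirac L)
    {v : E × Dual ℝ E} (hv : v ∈ perp L) (hvv : diracPairing v v = 0) : v ∈ L := by
  have hvL : ∀ p ∈ L, diracFlat v p = 0 := mem_perp.mp hv
  have hLv : ∀ p ∈ L, diracFlat p v = 0 := fun p hp => by
    rw [diracFlat_apply, diracPairing_comm]; exact hvL p hp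
  have hiso : IsIsotropic (L ⊔ ℝ ∙ v) := by
    intro p hp q hq
    obtain ⟨a, ha, _, hs, rfl⟩ := Submodule.mem_sup.mp hp
    obtain ⟨b, hb, _, ht, rfl⟩ := Submodule.mem_sup.mp hq
    obtain ⟨c, rfl⟩ := Submodule.mem_span_singleton.mp hs
    obtain ⟨d, rfl⟩ := Submodule.mem_span_singleton.mp ht
    rw [← diracFlat_apply]
    simp only [map_add, map_smul, LinearMap.add_apply, LinearMap.smul_apply, hvL b hb,
      hLv a ha, diracFlat_apply, hvv, hL.1 a ha b hb, smul_zero, add_zero]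
  rw [← hL.2 _ hiso le_sup_left]
  exact Submodule.mem_sup_right (Submodule.mem_span_singleton_self v)

lemma finrank_le_of_map_inr_dualAnnihilator_le [FiniteDimensional ℝ E]
    {L : Submodule ℝ (E × Dual ℝ E)}
    (hL : (L.map (LinearMap.fst ℝ E (Dual ℝ E))).dualAnnihilator.map
      (LinearMap.inr ℝ E (Dual ℝ E)) ≤ L) :
    finrank ℝ E ≤ finrank ℝ L := by
  set R := L.map (LinearMap.fst ℝ E (Dual ℝ E))
  set g := (LinearMap.fst ℝ E (Dual ℝ E)).domRestrict L
  have hker : finrank ℝ R.dualAnnihilator ≤ finrank ℝ (LinearMap.ker g) :=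
    calc finrank ℝ R.dualAnnihilator
        = finrank ℝ (R.dualAnnihilator.map (LinearMap.inr ℝ E (Dual ℝ E))) :=
          (Submodule.equivMapOfInjective _ LinearMap.inr_injective _).finrank_eq
      _ = finrank ℝ ((R.dualAnnihilator.map (LinearMap.inr ℝ E (Dual ℝ E))).comap L.subtype) :=
          (Submodule.comapSubtypeEquivOfLe hL).finrank_eq.symm
      _ ≤ finrank ℝ (LinearMap.ker g) := by
          rw [LinearMap.ker_domRestrict]
          refine Submodule.finrank_mono (Submodule.comap_mono ?_)
          rintro _ ⟨ξ, -, rfl⟩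
          simp
  have hrank := LinearMap.finrank_range_add_finrank_ker (K := ℝ) (V := L) g
  have hann := Subspace.finrank_add_finrank_dualAnnihilator_eq R
  rw [show LinearMap.range g = R from LinearMap.range_domRestrict _ _] at hrank
  omega

lemma IsDirac.finrank_le [FiniteDimensional ℝ E] {L : Submodule ℝ (E × Dual ℝ E)}
    (hL : IsDirac L) : finrank ℝ E ≤ finrank ℝ L := by
  refine finrank_le_of_map_inr_dualAnnihilator_le ?_
  rintro _ ⟨ξ, hξ, rfl⟩
  refine hL.mem_of_mem_perp (mem_perp.mpr fun p hp => ?_) (by simp [diracPairing])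
  have : ξ p.1 = 0 := (Submodule.mem_dualAnnihilator ξ).mp hξ _ ⟨p, hp, rfl⟩
  simp [diracPairing, this]

lemma IsDirac.perp_le [FiniteDimensional ℝ E] {L : Submodule ℝ (E × Dual ℝ E)}
    (hL : IsDirac L) : perp L ≤ L := by
  have hdim := finrank_perp_add_finrank L
  have := hL.finrank_le
  exact (Submodule.eq_of_le_of_finrank_le hL.1.le_perp (by omega)).ge

/-- `T` and `S` parametrize the relation `{(T a, S a)}` between `E ⊕ E*` and `F ⊕ F*`; the two
fields say that it is Lagrangian for the difference of the two pairings. -/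
structure IsLagrangianRelation (T : P →ₗ[ℝ] E × Dual ℝ E) (S : P →ₗ[ℝ] F × Dual ℝ F) :
    Prop where
  diracPairing_eq : ∀ a b, diracPairing (T a) (T b) = diracPairing (S a) (S b)
  exists_of_diracPairing_eq : ∀ ℓ r, (∀ a, diracPairing ℓ (T a) = diracPairing r (S a)) →
    ∃ a, T a = ℓ ∧ S a = r

namespace IsLagrangianRelation

variable {T : P →ₗ[ℝ] E × Dual ℝ E} {S : P →ₗ[ℝ] F × Dual ℝ F}

lemma symm (h : IsLagrangianRelation T S) : IsLagrangianRelation S T where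
  diracPairing_eq a b := (h.diracPairing_eq a b).symm
  exists_of_diracPairing_eq r ℓ H :=
    let ⟨a, hT, hS⟩ := h.exists_of_diracPairing_eq ℓ r fun a => (H a).symm
    ⟨a, hS, hT⟩

lemma isIsotropic_map_comap (h : IsLagrangianRelation T S) {L : Submodule ℝ (E × Dual ℝ E)}
    (hL : IsIsotropic L) : IsIsotropic ((L.comap T).map S) := by
  rintro _ ⟨a, ha, rfl⟩ _ ⟨b, hb, rfl⟩
  rw [← h.diracPairing_eq]
  exact hL _ ha _ hb

lemma perp_map_comap_le [FiniteDimensional ℝ E] [FiniteDimensional ℝ F]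
    (h : IsLagrangianRelation T S) {L : Submodule ℝ (E × Dual ℝ E)} (hL : perp L ≤ L) :
    perp ((L.comap T).map S) ≤ (L.comap T).map S := by
  intro q hq
  -- `q ∈ S(T⁻¹ L)` iff `(0, q) ∈ graph + L ⊕ 0`, which is tested against the functionals
  -- vanishing there; the nondegenerate pairings represent each of them by a pair `(ℓ, r)`.
  suffices hK : (0, q) ∈ LinearMap.range (T.prod S) ⊔ L.prod ⊥ by
    obtain ⟨_, ⟨a, rfl⟩, l, ⟨hl, hl0⟩, hsum⟩ := Submodule.mem_sup.mp hK
    have hTa : T a = -l.1 := eq_neg_of_add_eq_zero_left congr(($hsum).1)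
    have hSa : S a = q := by simpa [(Submodule.mem_bot ℝ).mp hl0] using congr(($hsum).2)
    exact ⟨a, by simpa [hTa] using L.neg_mem hl, hSa⟩
  rw [← Subspace.forall_mem_dualAnnihilator_apply_eq_zero_iff]
  intro G hG
  rw [Submodule.dualAnnihilator_sup_eq, Submodule.mem_inf, Submodule.mem_dualAnnihilator,
    Submodule.mem_dualAnnihilator] at hG
  set ℓ := diracFlatEquiv.symm (G ∘ₗ LinearMap.inl ℝ _ _)
  set r := diracFlatEquiv.symm (G ∘ₗ LinearMap.inr ℝ _ _)
  have hG_apply : ∀ u v, G (u, v) = diracPairing ℓ u + diracPairing r v := fun u v => by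
    rw [diracPairing_diracFlatEquiv_symm, diracPairing_diracFlatEquiv_symm, LinearMap.comp_apply,
      LinearMap.comp_apply, ← map_add, LinearMap.inl_apply, LinearMap.inr_apply, Prod.mk_add_mk,
      add_zero, zero_add]
  have hℓ : ℓ ∈ L := hL <| mem_perp.mpr fun p hp => by
    simpa [hG_apply, diracPairing] using hG.2 (p, 0) ⟨hp, Submodule.zero_mem _⟩
  obtain ⟨a, hTa, hSa⟩ := h.exists_of_diracPairing_eq (-ℓ) r fun a => by
    have : G (T a, S a) = 0 := hG.1 _ ⟨a, rfl⟩
    rw [hG_apply] at this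
    simp only [diracPairing, Prod.fst_neg, Prod.snd_neg, LinearMap.neg_apply, map_neg] at this ⊢
    linarith
  have hr : r ∈ (L.comap T).map S := ⟨a, by simpa [hTa] using L.neg_mem hℓ, hSa⟩
  rw [hG_apply, diracPairing_comm r q, mem_perp.mp hq r hr]
  simp [diracPairing]

end IsLagrangianRelation

lemma isLagrangianRelation_prodMap (φ : E →ₗ[ℝ] F) :
    IsLagrangianRelation (LinearMap.id.prodMap φ.dualMap) (φ.prodMap LinearMap.id) where
  diracPairing_eq a b := by simp [diracPairing]
  exists_of_diracPairing_eq := by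
    rintro ⟨y, ζ⟩ ⟨w, θ⟩ H
    have hζ : ζ = φ.dualMap θ := LinearMap.ext fun x => by
      simpa [diracPairing] using H (x, 0)
    have hw : φ y = w := sub_eq_zero.mp <| (Module.forall_dual_apply_eq_zero_iff ℝ _).mp
      fun η => by simpa [diracPairing, sub_eq_zero] using H (0, η)
    exact ⟨(y, θ), by simp [hζ], by simp [hw]⟩

lemma fwd_eq_map_comap (φ : E →ₗ[ℝ] F) (L : Submodule ℝ (E × Dual ℝ E)) :
    Fwd φ L = (L.comap (LinearMap.id.prodMap φ.dualMap)).map (φ.prodMap LinearMap.id) := by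
  ext ⟨w, η⟩
  constructor
  · rintro ⟨x, rfl, hx⟩
    exact ⟨(x, η), hx, rfl⟩
  · rintro ⟨⟨x, η'⟩, hx, h⟩
    obtain ⟨rfl, rfl⟩ := Prod.mk.inj h
    exact ⟨x, rfl, hx⟩

lemma bwd_eq_map_comap (φ : E →ₗ[ℝ] F) (L : Submodule ℝ (F × Dual ℝ F)) :
    Bwd φ L = (L.comap (φ.prodMap LinearMap.id)).map (LinearMap.id.prodMap φ.dualMap) := by
  ext ⟨x, ξ⟩
  constructor
  · rintro ⟨η, rfl, hη⟩
    exact ⟨(x, η), hη, rfl⟩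
  · rintro ⟨⟨x', η⟩, hη, h⟩
    obtain ⟨rfl, rfl⟩ := Prod.mk.inj h
    exact ⟨η, rfl, hη⟩

lemma IsDirac.map_comap [FiniteDimensional ℝ E] [FiniteDimensional ℝ F]
    {T : P →ₗ[ℝ] E × Dual ℝ E} {S : P →ₗ[ℝ] F × Dual ℝ F} (h : IsLagrangianRelation T S)
    {L : Submodule ℝ (E × Dual ℝ E)} (hL : IsDirac L) : IsDirac ((L.comap T).map S) :=
  isDirac_of_isIsotropic_of_perp_le (h.isIsotropic_map_comap hL.1)
    (h.perp_map_comap_le hL.perp_le)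

/-- Forward and backward images of Dirac structures along a linear map are
Dirac structures. -/
theorem stmt_5 (φ : V →ₗ[ℝ] W) :
    (∀ LV : Submodule ℝ (V × Module.Dual ℝ V), IsDirac LV → IsDirac (Fwd φ LV)) ∧
    (∀ LW : Submodule ℝ (W × Module.Dual ℝ W), IsDirac LW → IsDirac (Bwd φ LW)) :=
  ⟨fun LV hLV => fwd_eq_map_comap φ LV ▸ hLV.map_comap (isLagrangianRelation_prodMap φ),
    fun LW hLW => bwd_eq_map_comap φ LW ▸ hLW.map_comap (isLagrangianRelation_prodMap φ).symm⟩
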